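/- arXiv:2310.06242 — 3 statements merged into one kernel-verified Lean document; each statement's English description precedes it below -/
import Mathlib

section
/- Let c ≥ τ*. Define the decision rule δ*(y) = exp(2τ*y)/(exp(2τ*y)+1). Then δ* is minimax optimal for mean square regret in the one-dimensional Gaussian problem with parameter space [−c,c]: for every measurable rule δ : ℝ → [0,1] one has sup_{τ∈[−c,c]} R(δ,τ) ≥ sup_{τ∈[−c,c]} R(δ*,τ), and moreover sup_{τ∈[−c,c]} R(δ*,τ) = (τ*)² ρ(τ*). -/
open Real MeasureTheory

/-- The standard normal density. -/
noncomputable def gaussPdf (x : ℝ) : ℝ :=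
  (Real.sqrt (2 * Real.pi))⁻¹ * Real.exp (-(x ^ 2) / 2)

/-- ρ(a) = ∫ (1/(exp(2ay)+1))² φ(y−a) dy. -/
noncomputable def ρ (a : ℝ) : ℝ :=
  ∫ y : ℝ, (1 / (Real.exp (2 * a * y) + 1)) ^ 2 * gaussPdf (y - a)

/-- Mean square regret of a rule δ at parameter τ in the one-dimensional Gaussian
problem with unit variance. -/
noncomputable def R (δ : ℝ → ℝ) (τ : ℝ) : ℝ :=
  τ ^ 2 * ∫ y : ℝ, ((if 0 ≤ τ then (1 : ℝ) else 0) - δ y) ^ 2 * gaussPdf (y - τ)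

/-!
Write `G(t, τ) = missRisk t τ` and `W(t, τ) = missRiskWeighted t τ`, so that the rule
`δ_t(y) = σ(2ty)` has regret `R(δ_t, τ) = τ² G(t, |τ|)`.

`δ_t` is the Bayes rule for the uniform prior on `{-t, t}`; hence every rule has
`R(δ, t) + R(δ, -t) ≥ 2 t² ρ(t)`, which gives the lower bound, and `b ↦ G(b, t)` is minimised at
`b = t`. By this envelope property `ρ'(t) = ∂_τ G(t, t) = -4 t W(t, t)`, so at the maximiser `τ*`
of `τ² ρ(τ)` we get `G(τ*, τ*) = 2 τ*² W(τ*, τ*)`. Chebyshev's integral inequality, applied to the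
Gaussian tilts `φ(y - τ₂) ∝ e^{(τ₂ - τ₁) y} φ(y - τ₁)`, makes `τ ↦ W(t, τ) / G(t, τ)` nondecreasing,
so the derivative `2τ G (1 - 2tτ W / G)` of `τ ↦ τ² G(τ*, τ)` changes sign only at `τ*`: the worst
case of `δ_{τ*}` is `τ*² ρ(τ*)`, attained at `τ = τ*`.
-/

open Set Filter

theorem gaussPdf_pos (x : ℝ) : 0 < gaussPdf x := by
  unfold gaussPdf
  positivity

@[fun_prop]
theorem continuous_gaussPdf : Continuous gaussPdf := by
  unfold gaussPdf
  fun_prop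

theorem gaussPdf_sub_eq_gaussianPDFReal (y τ : ℝ) :
    gaussPdf (y - τ) = ProbabilityTheory.gaussianPDFReal τ 1 y := by
  simp [gaussPdf, ProbabilityTheory.gaussianPDFReal]

theorem integrable_gaussPdf_sub (τ : ℝ) : Integrable fun y => gaussPdf (y - τ) := by
  simpa only [gaussPdf_sub_eq_gaussianPDFReal] using
    ProbabilityTheory.integrable_gaussianPDFReal τ 1

theorem integral_gaussPdf_sub (τ : ℝ) : ∫ y, gaussPdf (y - τ) = 1 := by
  simpa only [gaussPdf_sub_eq_gaussianPDFReal] using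
    ProbabilityTheory.integral_gaussianPDFReal_eq_one τ one_ne_zero

theorem integrable_abs_mul_gaussPdf : Integrable fun z => |z| * gaussPdf z := by
  refine ((integrable_mul_exp_neg_mul_sq (b := 1 / 2) (by norm_num)).norm.const_mul
    (√(2 * π))⁻¹).congr (Eventually.of_forall fun z => ?_)
  simp only [gaussPdf, norm_mul, Real.norm_eq_abs, abs_of_pos (exp_pos _)]
  ring_nf

theorem integrable_abs_mul_gaussPdf_sub (τ : ℝ) :
    Integrable fun y => |y| * gaussPdf (y - τ) := by
  refine ((integrable_abs_mul_gaussPdf.comp_sub_right τ).add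
    ((integrable_gaussPdf_sub τ).const_mul |τ|)).mono'
    (by fun_prop) (Eventually.of_forall fun y => ?_)
  have hφ := gaussPdf_pos (y - τ)
  simp only [Pi.add_apply, norm_mul, Real.norm_eq_abs, abs_abs, abs_of_pos hφ]
  nlinarith [abs_sub_abs_le_abs_sub y τ]

theorem integrable_mul_gaussPdf_sub {f : ℝ → ℝ} (hf : AEStronglyMeasurable f) {a b : ℝ}
    (hfb : ∀ y, |f y| ≤ a * |y| + b) (τ : ℝ) :
    Integrable fun y => f y * gaussPdf (y - τ) := by
  refine (((integrable_abs_mul_gaussPdf_sub τ).const_mul a).add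
    ((integrable_gaussPdf_sub τ).const_mul b)).mono'
    (hf.mul (continuous_gaussPdf.comp (continuous_sub_right τ)).aestronglyMeasurable)
    (Eventually.of_forall fun y => ?_)
  have hφ := gaussPdf_pos (y - τ)
  simp only [Pi.add_apply, norm_mul, Real.norm_eq_abs, abs_of_pos hφ]
  nlinarith [hfb y]

theorem integrable_mul_gaussPdf_sub_of_abs_le {f : ℝ → ℝ} (hf : AEStronglyMeasurable f) {C : ℝ}
    (hfC : ∀ y, |f y| ≤ C) (τ : ℝ) :
    Integrable fun y => f y * gaussPdf (y - τ) :=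
  integrable_mul_gaussPdf_sub hf (a := 0) (fun y => by simpa using hfC y) τ

theorem integral_comp_add_mul_gaussPdf (f : ℝ → ℝ) (τ : ℝ) :
    ∫ z, f (z + τ) * gaussPdf z = ∫ y, f y * gaussPdf (y - τ) := by
  simpa using integral_add_right_eq_self (fun y => f y * gaussPdf (y - τ)) τ

theorem exp_mul_gaussPdf_sub (τ₁ τ₂ y : ℝ) :
    exp ((τ₂ - τ₁) * y) * gaussPdf (y - τ₁) = exp ((τ₂ ^ 2 - τ₁ ^ 2) / 2) * gaussPdf (y - τ₂) := by
  simp only [gaussPdf, mul_left_comm (exp _), ← exp_add]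
  congr 2
  ring

theorem gaussPdf_neg (x : ℝ) : gaussPdf (-x) = gaussPdf x := by
  simp [gaussPdf]

theorem integral_mul_integral_le_of_monovary {α : Type*} [MeasurableSpace α] {μ : Measure α}
    [SFinite μ] {s ℓ u : α → ℝ} (hsℓ : Monovary s ℓ) (hu : 0 ≤ u) (hu_int : Integrable u μ)
    (hsu : Integrable (fun x => s x * u x) μ) (hℓu : Integrable (fun x => ℓ x * u x) μ)
    (hsℓu : Integrable (fun x => s x * ℓ x * u x) μ) :
    (∫ x, s x * u x ∂μ) * ∫ x, ℓ x * u x ∂μ ≤ (∫ x, s x * ℓ x * u x ∂μ) * ∫ x, u x ∂μ := by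
  have hpos : 0 ≤ ∫ p : α × α, (s p.1 - s p.2) * (ℓ p.1 - ℓ p.2) * (u p.1 * u p.2) ∂μ.prod μ :=
    integral_nonneg fun p =>
      mul_nonneg (hsℓ.sub_mul_sub_nonneg p.2 p.1) (mul_nonneg (hu p.1) (hu p.2))
  have hexpand : (fun p : α × α => (s p.1 - s p.2) * (ℓ p.1 - ℓ p.2) * (u p.1 * u p.2)) =
      fun p => (s p.1 * ℓ p.1 * u p.1) * u p.2 + u p.1 * (s p.2 * ℓ p.2 * u p.2) -
        ((s p.1 * u p.1) * (ℓ p.2 * u p.2) + (ℓ p.1 * u p.1) * (s p.2 * u p.2)) := by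
    ext p; ring
  have h₁ := hsℓu.mul_prod hu_int
  have h₂ := hu_int.mul_prod hsℓu
  have h₃ := hsu.mul_prod hℓu
  have h₄ := hℓu.mul_prod hsu
  rw [hexpand, integral_sub, integral_add h₁ h₂, integral_add h₃ h₄,
    integral_prod_mul (fun x => s x * ℓ x * u x) u, integral_prod_mul u (fun x => s x * ℓ x * u x),
    integral_prod_mul (fun x => s x * u x) (fun x => ℓ x * u x),
    integral_prod_mul (fun x => ℓ x * u x) (fun x => s x * u x)] at hpos
  · linarith
  exacts [h₁.add h₂, h₃.add h₄]

theorem sigmoid_eq_exp_div (θ : ℝ) : sigmoid θ = exp θ / (exp θ + 1) := by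
  rw [sigmoid_def, exp_neg]
  field_simp

theorem one_sub_sigmoid_eq_one_div (θ : ℝ) : 1 - sigmoid θ = 1 / (exp θ + 1) := by
  rw [sigmoid_eq_exp_div]
  field_simp
  ring

theorem hasDerivAt_one_sub_sigmoid_sq (θ : ℝ) :
    HasDerivAt (fun θ => (1 - sigmoid θ) ^ 2) (-2 * (sigmoid θ * (1 - sigmoid θ) ^ 2)) θ := by
  refine (((hasDerivAt_sigmoid θ).const_sub 1).fun_pow 2).congr_deriv ?_
  norm_num
  ring

theorem sigmoid_two_mul_mul_eq_gaussPdf_div (t y : ℝ) :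
    sigmoid (2 * t * y) = gaussPdf (y - t) / (gaussPdf (y - t) + gaussPdf (y + t)) := by
  have htilt := exp_mul_gaussPdf_sub (-t) t y
  rw [show t - -t = 2 * t by ring, sub_neg_eq_add, show (t ^ 2 - (-t) ^ 2) / 2 = 0 by ring,
    exp_zero, one_mul] at htilt
  rw [sigmoid_eq_exp_div, ← htilt]
  have := gaussPdf_pos (y + t)
  field_simp

theorem integrable_sq_mul_gaussPdf_sub {f : ℝ → ℝ} (hf : AEStronglyMeasurable f)
    (hf₁ : ∀ y, |f y| ≤ 1) (τ : ℝ) : Integrable fun y => f y ^ 2 * gaussPdf (y - τ) :=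
  integrable_mul_gaussPdf_sub_of_abs_le (f := fun y => f y ^ 2) (hf.pow 2)
    (fun y => by rw [abs_pow]; exact pow_le_one₀ (abs_nonneg _) (hf₁ y)) τ

theorem abs_le_one_of_mem_Icc {p : ℝ} (hp : p ∈ Icc (0 : ℝ) 1) : |p| ≤ 1 :=
  abs_le.2 ⟨by linarith [hp.1], hp.2⟩

theorem abs_one_sub_le_one_of_mem_Icc {p : ℝ} (hp : p ∈ Icc (0 : ℝ) 1) : |1 - p| ≤ 1 :=
  abs_le.2 ⟨by linarith [hp.2], by linarith [hp.1]⟩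

theorem sigmoid_mem_Icc (θ : ℝ) : sigmoid θ ∈ Icc (0 : ℝ) 1 :=
  ⟨sigmoid_nonneg θ, sigmoid_le_one θ⟩

theorem abs_sigmoid_mul_one_sub_sigmoid_sq_le_one (θ : ℝ) :
    |sigmoid θ * (1 - sigmoid θ) ^ 2| ≤ 1 := by
  rw [abs_mul, abs_pow]
  exact mul_le_one₀ (abs_le_one_of_mem_Icc (sigmoid_mem_Icc θ)) (by positivity)
    (pow_le_one₀ (abs_nonneg _) (abs_one_sub_le_one_of_mem_Icc (sigmoid_mem_Icc θ)))

noncomputable def missRisk (t τ : ℝ) : ℝ :=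
  ∫ y, (1 - sigmoid (2 * t * y)) ^ 2 * gaussPdf (y - τ)

noncomputable def missRiskWeighted (t τ : ℝ) : ℝ :=
  ∫ y, sigmoid (2 * t * y) * (1 - sigmoid (2 * t * y)) ^ 2 * gaussPdf (y - τ)

noncomputable def missRiskDerivRule (t τ : ℝ) : ℝ :=
  ∫ y, -4 * y * (sigmoid (2 * t * y) * (1 - sigmoid (2 * t * y)) ^ 2) * gaussPdf (y - τ)

theorem rho_eq_missRisk (a : ℝ) : ρ a = missRisk a a := by
  simp only [ρ, missRisk, one_sub_sigmoid_eq_one_div]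

theorem integrable_missRisk (t τ : ℝ) :
    Integrable fun y => (1 - sigmoid (2 * t * y)) ^ 2 * gaussPdf (y - τ) :=
  integrable_sq_mul_gaussPdf_sub (by fun_prop)
    (fun _ => abs_one_sub_le_one_of_mem_Icc (sigmoid_mem_Icc _)) τ

theorem integrable_missRiskWeighted (t τ : ℝ) :
    Integrable fun y => sigmoid (2 * t * y) * (1 - sigmoid (2 * t * y)) ^ 2 * gaussPdf (y - τ) :=
  integrable_mul_gaussPdf_sub_of_abs_le (by fun_prop)
    (fun _ => abs_sigmoid_mul_one_sub_sigmoid_sq_le_one _) τ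

theorem missRisk_pos (t τ : ℝ) : 0 < missRisk t τ :=
  integral_pos_of_integrable_nonneg_nonzero (x := 0) (by fun_prop) (integrable_missRisk t τ)
    (fun y => mul_nonneg (sq_nonneg _) (gaussPdf_pos _).le)
    (mul_pos (pow_pos (sub_pos.2 (sigmoid_lt_one _)) 2) (gaussPdf_pos _)).ne'

theorem missRiskWeighted_nonneg (t τ : ℝ) : 0 ≤ missRiskWeighted t τ :=
  integral_nonneg fun _ =>
    mul_nonneg (mul_nonneg (sigmoid_nonneg _) (sq_nonneg _)) (gaussPdf_pos _).le

theorem integral_sigmoid_sq_mul_gaussPdf_add (b a : ℝ) :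
    ∫ y, sigmoid (2 * b * y) ^ 2 * gaussPdf (y + a) = missRisk b a := by
  rw [missRisk, ← integral_neg_eq_self]
  congr 1
  ext y
  rw [show 2 * b * -y = -(2 * b * y) by ring, sigmoid_neg, show -y + a = -(y - a) by ring,
    gaussPdf_neg]

theorem integral_deriv_missRisk_affine (β γ b τ : ℝ) :
    ∫ z, -2 * (sigmoid (2 * b * (z + τ)) * (1 - sigmoid (2 * b * (z + τ))) ^ 2) *
      (2 * β * (z + τ) + 2 * b * γ) * gaussPdf z =
    β * missRiskDerivRule b τ + γ * (-4 * b * missRiskWeighted b τ) := by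
  have hD : Integrable fun y =>
      -4 * y * (sigmoid (2 * b * y) * (1 - sigmoid (2 * b * y)) ^ 2) * gaussPdf (y - τ) := by
    refine integrable_mul_gaussPdf_sub (a := 4) (b := 0) (by fun_prop) (fun y => ?_) τ
    have hw := abs_sigmoid_mul_one_sub_sigmoid_sq_le_one (2 * b * y)
    rw [abs_mul, abs_mul, abs_neg, abs_of_pos four_pos]
    nlinarith [abs_nonneg y]
  rw [integral_comp_add_mul_gaussPdf (fun y => -2 *
    (sigmoid (2 * b * y) * (1 - sigmoid (2 * b * y)) ^ 2) * (2 * β * y + 2 * b * γ)) τ,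
    missRiskDerivRule, missRiskWeighted, ← integral_const_mul, ← integral_const_mul,
    ← integral_const_mul, ← integral_add (hD.const_mul β)
      (((integrable_missRiskWeighted b τ).const_mul _).const_mul γ)]
  congr 1
  ext y
  ring

-- Differentiating along affine paths gives both partial derivatives and, on the diagonal, the
-- derivative of `ρ` from a single dominated-differentiation argument.
theorem hasDerivAt_missRisk_affine (β b₀ γ τ₀ x₀ : ℝ) :
    HasDerivAt (fun x => missRisk (β * x + b₀) (γ * x + τ₀))
      (β * missRiskDerivRule (β * x₀ + b₀) (γ * x₀ + τ₀) +
        γ * (-4 * (β * x₀ + b₀) * missRiskWeighted (β * x₀ + b₀) (γ * x₀ + τ₀))) x₀ := by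
  obtain ⟨K, hK⟩ := (isCompact_closedBall x₀ 1).exists_bound_of_continuousOn
    (f := fun x => |β| * |γ * x + τ₀| + |γ| * |β * x + b₀|) (by fun_prop)
  have hshift : ∀ x, missRisk (β * x + b₀) (γ * x + τ₀) =
      ∫ z, (1 - sigmoid (2 * (β * x + b₀) * (z + (γ * x + τ₀)))) ^ 2 * gaussPdf z := fun x =>
    (integral_comp_add_mul_gaussPdf (fun y => (1 - sigmoid (2 * (β * x + b₀) * y)) ^ 2) _).symm
  have hF_int : Integrable fun z =>
      (1 - sigmoid (2 * (β * x₀ + b₀) * (z + (γ * x₀ + τ₀)))) ^ 2 * gaussPdf z := by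
    simpa using integrable_sq_mul_gaussPdf_sub (by fun_prop)
      (fun z => abs_one_sub_le_one_of_mem_Icc (sigmoid_mem_Icc _)) 0
  have hK₀ : 0 ≤ K := (norm_nonneg _).trans (hK x₀ (Metric.mem_closedBall_self zero_le_one))
  have hbound_int : Integrable fun z => (4 * |β| * |z| + 4 * K) * gaussPdf z := by
    simpa using integrable_mul_gaussPdf_sub (f := fun z => 4 * |β| * |z| + 4 * K)
      (a := 4 * |β|) (b := 4 * K) (by fun_prop) (fun z => (abs_of_nonneg (by positivity)).le) 0
  have key := hasDerivAt_integral_of_dominated_loc_of_deriv_le (μ := volume) (x₀ := x₀)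
    (F := fun x z => (1 - sigmoid (2 * (β * x + b₀) * (z + (γ * x + τ₀)))) ^ 2 * gaussPdf z)
    (F' := fun x z => -2 * (sigmoid (2 * (β * x + b₀) * (z + (γ * x + τ₀))) *
        (1 - sigmoid (2 * (β * x + b₀) * (z + (γ * x + τ₀)))) ^ 2) *
      (2 * β * (z + (γ * x + τ₀)) + 2 * (β * x + b₀) * γ) * gaussPdf z)
    (bound := fun z => (4 * |β| * |z| + 4 * K) * gaussPdf z)
    (Metric.ball_mem_nhds x₀ one_pos) (Eventually.of_forall fun x => by fun_prop) hF_int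
    (by fun_prop) (Eventually.of_forall fun z x hx => ?_) hbound_int
    (Eventually.of_forall fun z x _ => ?_)
  · simp only [hshift]
    exact key.2.congr_deriv (integral_deriv_missRisk_affine β γ _ _)
  · have hx' := hK x (Metric.ball_subset_closedBall hx)
    rw [Real.norm_eq_abs, abs_of_nonneg (by positivity)] at hx'
    have hL : |2 * β * (z + (γ * x + τ₀)) + 2 * (β * x + b₀) * γ| ≤ 2 * |β| * |z| + 2 * K := by
      rw [show 2 * β * (z + (γ * x + τ₀)) + 2 * (β * x + b₀) * γ =
        2 * (β * z + β * (γ * x + τ₀) + γ * (β * x + b₀)) by ring, abs_mul, abs_two]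
      have := abs_add_three (β * z) (β * (γ * x + τ₀)) (γ * (β * x + b₀))
      simp only [abs_mul] at this
      linarith
    have hw := abs_sigmoid_mul_one_sub_sigmoid_sq_le_one (2 * (β * x + b₀) * (z + (γ * x + τ₀)))
    have hφ := gaussPdf_pos z
    rw [abs_mul] at hw
    simp only [norm_mul, Real.norm_eq_abs, abs_neg, abs_two, abs_of_pos hφ]
    calc _ ≤ 2 * 1 * (2 * |β| * |z| + 2 * K) * gaussPdf z := by gcongr
      _ = _ := by ring
  · have h₁ : HasDerivAt (fun x => 2 * (β * x + b₀)) (2 * β) x := by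
      simpa using (((hasDerivAt_id x).const_mul β).add_const b₀).const_mul 2
    have h₂ : HasDerivAt (fun x => z + (γ * x + τ₀)) γ x := by
      simpa using (((hasDerivAt_id x).const_mul γ).add_const τ₀).const_add z
    exact ((hasDerivAt_one_sub_sigmoid_sq _).comp x (h₁.mul h₂)).mul_const _

theorem hasDerivAt_missRisk (t τ : ℝ) :
    HasDerivAt (missRisk t) (-4 * t * missRiskWeighted t τ) τ := by
  simpa using hasDerivAt_missRisk_affine 0 t 1 0 τ

theorem hasDerivAt_missRisk_left (b τ : ℝ) :
    HasDerivAt (fun b => missRisk b τ) (missRiskDerivRule b τ) b := by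
  simpa using hasDerivAt_missRisk_affine 1 0 0 τ b

theorem sq_mul_add_sq_mul_le (a b δ : ℝ) (hab : 0 < a + b) :
    a * (1 - a / (a + b)) ^ 2 + b * (a / (a + b)) ^ 2 ≤ a * (1 - δ) ^ 2 + b * δ ^ 2 := by
  have h : a * (1 - δ) ^ 2 + b * δ ^ 2 - (a * (1 - a / (a + b)) ^ 2 + b * (a / (a + b)) ^ 2) =
      (a + b) * (δ - a / (a + b)) ^ 2 := by
    field_simp
    ring
  nlinarith [mul_nonneg hab.le (sq_nonneg (δ - a / (a + b)))]

theorem two_mul_rho_le (t : ℝ) {δ : ℝ → ℝ} (hδ : Measurable δ) (h01 : ∀ y, δ y ∈ Icc (0 : ℝ) 1) :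
    2 * ρ t ≤ (∫ y, (1 - δ y) ^ 2 * gaussPdf (y - t)) + ∫ y, δ y ^ 2 * gaussPdf (y + t) := by
  have hplus : ∀ {f : ℝ → ℝ}, Measurable f → (∀ y, |f y| ≤ 1) →
      Integrable fun y => f y ^ 2 * gaussPdf (y + t) := fun hf hf₁ => by
    simpa using integrable_sq_mul_gaussPdf_sub hf.aestronglyMeasurable hf₁ (-t)
  have hσ₁ := integrable_missRisk t t
  have hσ₂ := hplus (f := fun y => sigmoid (2 * t * y)) (by fun_prop)
    fun y => abs_le_one_of_mem_Icc (sigmoid_mem_Icc _)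
  have hδ₁ := integrable_sq_mul_gaussPdf_sub (f := fun y => 1 - δ y) (by fun_prop)
    (fun y => abs_one_sub_le_one_of_mem_Icc (h01 y)) t
  have hδ₂ := hplus hδ fun y => abs_le_one_of_mem_Icc (h01 y)
  rw [rho_eq_missRisk, two_mul]
  nth_rewrite 2 [← integral_sigmoid_sq_mul_gaussPdf_add]
  rw [missRisk, ← integral_add hσ₁ hσ₂, ← integral_add hδ₁ hδ₂]
  refine integral_mono (hσ₁.add hσ₂) (hδ₁.add hδ₂) fun y => ?_
  have hφ := add_pos (gaussPdf_pos (y - t)) (gaussPdf_pos (y + t))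
  simpa only [sigmoid_two_mul_mul_eq_gaussPdf_div, mul_comm _ (gaussPdf _)] using
    sq_mul_add_sq_mul_le _ _ (δ y) hφ

theorem missRisk_self_le (t b : ℝ) : missRisk t t ≤ missRisk b t := by
  have h := two_mul_rho_le t (δ := fun y => sigmoid (2 * b * y)) (by fun_prop)
    fun y => sigmoid_mem_Icc _
  rw [integral_sigmoid_sq_mul_gaussPdf_add, rho_eq_missRisk] at h
  change 2 * missRisk t t ≤ missRisk b t + missRisk b t at h
  linarith

theorem missRiskDerivRule_self_eq_zero (t : ℝ) : missRiskDerivRule t t = 0 :=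
  IsLocalMin.hasDerivAt_eq_zero (Eventually.of_forall fun b => missRisk_self_le t b)
    (hasDerivAt_missRisk_left t t)

theorem hasDerivAt_rho (t : ℝ) : HasDerivAt ρ (-4 * t * missRiskWeighted t t) t := by
  have h := hasDerivAt_missRisk_affine 1 0 1 0 t
  simp only [one_mul, add_zero, missRiskDerivRule_self_eq_zero, zero_add] at h
  rwa [← funext rho_eq_missRisk] at h

theorem pos_of_forall_sq_mul_rho_le {t : ℝ} (ht : 0 ≤ t)
    (hmax : ∀ τ, 0 ≤ τ → τ ^ 2 * ρ τ ≤ t ^ 2 * ρ t) : 0 < t := by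
  refine ht.lt_of_ne fun h => ?_
  have h₁ := hmax 1 zero_le_one
  rw [← h, rho_eq_missRisk] at h₁
  linarith [missRisk_pos 1 1]

theorem missRisk_self_eq_of_forall_le {t : ℝ} (ht : 0 < t)
    (hmax : ∀ τ, 0 ≤ τ → τ ^ 2 * ρ τ ≤ t ^ 2 * ρ t) :
    missRisk t t = 2 * t ^ 2 * missRiskWeighted t t := by
  have hloc : IsLocalMax (fun τ => τ ^ 2 * ρ τ) t :=
    eventually_of_mem (Ici_mem_nhds ht) fun τ hτ => hmax τ hτ
  have h₀ := hloc.hasDerivAt_eq_zero ((hasDerivAt_pow 2 t).mul (hasDerivAt_rho t))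
  rw [rho_eq_missRisk] at h₀
  have h : t * (2 * (missRisk t t - 2 * t ^ 2 * missRiskWeighted t t)) = 0 := by
    linear_combination h₀
  simpa [ht.ne', sub_eq_zero] using h

theorem missRiskWeighted_mul_missRisk_le {t τ₁ τ₂ : ℝ} (ht : 0 ≤ t) (hτ : τ₁ ≤ τ₂) :
    missRiskWeighted t τ₁ * missRisk t τ₂ ≤ missRiskWeighted t τ₂ * missRisk t τ₁ := by
  set c := exp ((τ₂ ^ 2 - τ₁ ^ 2) / 2)
  have hs : Monotone fun y => sigmoid (2 * t * y) := fun a b hab => sigmoid_le (by gcongr)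
  have hℓ : Monotone fun y => exp ((τ₂ - τ₁) * y) := fun a b hab =>
    exp_le_exp.2 (mul_le_mul_of_nonneg_left hab (sub_nonneg.2 hτ))
  have hℓu : ∀ y, exp ((τ₂ - τ₁) * y) * ((1 - sigmoid (2 * t * y)) ^ 2 * gaussPdf (y - τ₁)) =
      c * ((1 - sigmoid (2 * t * y)) ^ 2 * gaussPdf (y - τ₂)) := fun y => by
    linear_combination (1 - sigmoid (2 * t * y)) ^ 2 * exp_mul_gaussPdf_sub τ₁ τ₂ y
  have hsℓu : ∀ y, sigmoid (2 * t * y) * exp ((τ₂ - τ₁) * y) *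
      ((1 - sigmoid (2 * t * y)) ^ 2 * gaussPdf (y - τ₁)) =
      c * (sigmoid (2 * t * y) * (1 - sigmoid (2 * t * y)) ^ 2 * gaussPdf (y - τ₂)) := fun y => by
    linear_combination sigmoid (2 * t * y) * (1 - sigmoid (2 * t * y)) ^ 2 *
      exp_mul_gaussPdf_sub τ₁ τ₂ y
  have hsu : ∀ y, sigmoid (2 * t * y) * ((1 - sigmoid (2 * t * y)) ^ 2 * gaussPdf (y - τ₁)) =
      sigmoid (2 * t * y) * (1 - sigmoid (2 * t * y)) ^ 2 * gaussPdf (y - τ₁) := fun y => by ring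
  have h := integral_mul_integral_le_of_monovary (μ := volume) (hs.monovary hℓ)
    (fun y => mul_nonneg (sq_nonneg _) (gaussPdf_pos _).le) (integrable_missRisk t τ₁)
    (by simpa only [hsu] using integrable_missRiskWeighted t τ₁)
    (by simpa only [hℓu] using (integrable_missRisk t τ₂).const_mul c)
    (by simpa only [hsℓu] using (integrable_missRiskWeighted t τ₂).const_mul c)
  simp only [hsu, hℓu, hsℓu, integral_const_mul] at h
  change missRiskWeighted t τ₁ * (c * missRisk t τ₂) ≤
    c * missRiskWeighted t τ₂ * missRisk t τ₁ at h
  nlinarith [exp_pos ((τ₂ ^ 2 - τ₁ ^ 2) / 2)]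

theorem monotoneOn_mul_missRiskWeighted_div_missRisk {t : ℝ} (ht : 0 ≤ t) :
    MonotoneOn (fun τ => τ * (missRiskWeighted t τ / missRisk t τ)) (Ici 0) := by
  intro τ₁ hτ₁ τ₂ _ hτ
  have hratio : missRiskWeighted t τ₁ / missRisk t τ₁ ≤ missRiskWeighted t τ₂ / missRisk t τ₂ := by
    rw [div_le_div_iff₀ (missRisk_pos t τ₁) (missRisk_pos t τ₂)]
    exact missRiskWeighted_mul_missRisk_le ht hτ
  exact mul_le_mul hτ hratio (div_nonneg (missRiskWeighted_nonneg t τ₁) (missRisk_pos t τ₁).le)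
    (le_trans hτ₁ hτ)

theorem hasDerivAt_sq_mul_missRisk (t x : ℝ) :
    HasDerivAt (fun τ => τ ^ 2 * missRisk t τ)
      (2 * x * missRisk t x * (1 - 2 * t * (x * (missRiskWeighted t x / missRisk t x)))) x := by
  refine ((hasDerivAt_pow 2 x).mul (hasDerivAt_missRisk t x)).congr_deriv ?_
  have := (missRisk_pos t x).ne'
  field_simp
  ring

theorem sq_mul_missRisk_le {t τ : ℝ} (ht : 0 < t)
    (hfoc : missRisk t t = 2 * t ^ 2 * missRiskWeighted t t) (hτ : 0 ≤ τ) :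
    τ ^ 2 * missRisk t τ ≤ t ^ 2 * missRisk t t := by
  set r := fun τ => τ * (missRiskWeighted t τ / missRisk t τ)
  have hr : MonotoneOn r (Ici 0) := monotoneOn_mul_missRiskWeighted_div_missRisk ht.le
  have hrt : 2 * t * r t = 1 := by
    have := missRisk_pos t t
    simp only [r]
    field_simp
    linarith
  have hderiv := hasDerivAt_sq_mul_missRisk t
  have hcont : Continuous fun τ => τ ^ 2 * missRisk t τ :=
    continuous_iff_continuousAt.2 fun x => (hderiv x).continuousAt
  rcases le_total τ t with hτt | htτ
  · refine monotoneOn_of_hasDerivWithinAt_nonneg (convex_Icc 0 t) hcont.continuousOn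
      (fun x _ => (hderiv x).hasDerivWithinAt) (fun x hx => ?_) ⟨hτ, hτt⟩ ⟨ht.le, le_rfl⟩ hτt
    rw [interior_Icc] at hx
    exact mul_nonneg (mul_pos (mul_pos two_pos hx.1) (missRisk_pos t x)).le
      (by nlinarith [hr hx.1.le ht.le hx.2.le])
  · refine antitoneOn_of_hasDerivWithinAt_nonpos (convex_Ici t) hcont.continuousOn
      (fun x _ => (hderiv x).hasDerivWithinAt) (fun x hx => ?_) (mem_Ici.2 le_rfl) htτ htτ
    rw [interior_Ici] at hx
    have hx₀ : 0 < x := ht.trans hx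
    exact mul_nonpos_of_nonneg_of_nonpos (mul_pos (mul_pos two_pos hx₀) (missRisk_pos t x)).le
      (by nlinarith [hr ht.le hx₀.le hx.le])

theorem regret_sigmoid (t τ : ℝ) :
    R (fun y => sigmoid (2 * t * y)) τ = τ ^ 2 * missRisk t |τ| := by
  rcases le_or_gt 0 τ with hτ | hτ
  · rw [R, if_pos hτ, abs_of_nonneg hτ, missRisk]
  · rw [R, if_neg hτ.not_ge, abs_of_neg hτ, ← integral_sigmoid_sq_mul_gaussPdf_add]
    simp only [zero_sub, neg_sq, ← sub_eq_add_neg]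

theorem regret_sigmoid_le {t : ℝ} (ht : 0 < t) (hmax : ∀ τ, 0 ≤ τ → τ ^ 2 * ρ τ ≤ t ^ 2 * ρ t)
    (τ : ℝ) : R (fun y => sigmoid (2 * t * y)) τ ≤ t ^ 2 * ρ t := by
  rw [regret_sigmoid, ← sq_abs τ, rho_eq_missRisk]
  exact sq_mul_missRisk_le ht (missRisk_self_eq_of_forall_le ht hmax) (abs_nonneg τ)

theorem regret_sigmoid_self {t : ℝ} (ht : 0 ≤ t) :
    R (fun y => sigmoid (2 * t * y)) t = t ^ 2 * ρ t := by
  rw [regret_sigmoid, abs_of_nonneg ht, rho_eq_missRisk]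

theorem regret_le_sq {δ : ℝ → ℝ} (hδ : Measurable δ) (h01 : ∀ y, δ y ∈ Icc (0 : ℝ) 1) (τ : ℝ) :
    R δ τ ≤ τ ^ 2 := by
  have hi : ∀ y, |(if 0 ≤ τ then (1 : ℝ) else 0) - δ y| ≤ 1 := fun y => by
    have := h01 y
    split_ifs <;> exact abs_le.2 ⟨by linarith [this.1, this.2], by linarith [this.1, this.2]⟩
  have hle : ∫ y, ((if 0 ≤ τ then (1 : ℝ) else 0) - δ y) ^ 2 * gaussPdf (y - τ) ≤ 1 := by
    refine (integral_mono (integrable_sq_mul_gaussPdf_sub (by fun_prop) hi τ)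
      (integrable_gaussPdf_sub τ) fun y => ?_).trans_eq (integral_gaussPdf_sub τ)
    have : ((if 0 ≤ τ then (1 : ℝ) else 0) - δ y) ^ 2 ≤ 1 := by nlinarith [abs_le.1 (hi y)]
    simpa using mul_le_mul_of_nonneg_right this (gaussPdf_pos (y - τ)).le
  exact (mul_le_mul_of_nonneg_left hle (sq_nonneg τ)).trans_eq (mul_one _)

theorem two_mul_sq_mul_rho_le_regret_add {t : ℝ} (ht : 0 < t) {δ : ℝ → ℝ} (hδ : Measurable δ)
    (h01 : ∀ y, δ y ∈ Icc (0 : ℝ) 1) : 2 * (t ^ 2 * ρ t) ≤ R δ t + R δ (-t) := by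
  have h := mul_le_mul_of_nonneg_left (two_mul_rho_le t hδ h01) (sq_nonneg t)
  rw [R, R, if_pos ht.le, if_neg (by linarith), neg_sq]
  simp only [zero_sub, neg_sq, sub_neg_eq_add]
  linarith

/-- If c ≥ τ*, the rule δ*(y) = exp(2τ*y)/(exp(2τ*y)+1) is minimax optimal for
mean square regret over τ ∈ [−c,c], with worst-case regret (τ*)²ρ(τ*). -/
theorem stmt_0 (τstar c : ℝ) (hτ0 : 0 ≤ τstar)
    (hτmax : ∀ τ : ℝ, 0 ≤ τ → τ ^ 2 * ρ τ ≤ τstar ^ 2 * ρ τstar)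
    (hc : τstar ≤ c)
    (δstar : ℝ → ℝ)
    (hδstar : ∀ y, δstar y = Real.exp (2 * τstar * y) / (Real.exp (2 * τstar * y) + 1)) :
    (∀ δ : ℝ → ℝ, Measurable δ → (∀ y, δ y ∈ Set.Icc (0 : ℝ) 1) →
      (⨆ τ : Set.Icc (-c) c, R δstar τ) ≤ ⨆ τ : Set.Icc (-c) c, R δ τ) ∧
    (⨆ τ : Set.Icc (-c) c, R δstar τ) = τstar ^ 2 * ρ τstar := by
  have ht : 0 < τstar := pos_of_forall_sq_mul_rho_le hτ0 hτmax
  obtain rfl : δstar = fun y => sigmoid (2 * τstar * y) :=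
    funext fun y => by rw [hδstar, sigmoid_eq_exp_div]
  have hmem : τstar ∈ Icc (-c) c := ⟨by linarith, hc⟩
  have hmem_neg : -τstar ∈ Icc (-c) c := ⟨by linarith, by linarith⟩
  have : Nonempty (Icc (-c) c) := ⟨⟨τstar, hmem⟩⟩
  have hsup : (⨆ τ : Icc (-c) c, R (fun y => sigmoid (2 * τstar * y)) τ) = τstar ^ 2 * ρ τstar :=
    le_antisymm (ciSup_le fun τ => regret_sigmoid_le ht hτmax τ)
      (le_ciSup_of_le ⟨_, forall_mem_range.2 fun τ => regret_sigmoid_le ht hτmax τ⟩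
        ⟨τstar, hmem⟩ (regret_sigmoid_self hτ0).ge)
  refine ⟨fun δ hδ h01 => ?_, hsup⟩
  have hbdd : BddAbove (range fun τ : Icc (-c) c => R δ τ) :=
    ⟨c ^ 2, forall_mem_range.2 fun τ => (regret_le_sq hδ h01 τ).trans (sq_le_sq' τ.2.1 τ.2.2)⟩
  have h₁ := le_ciSup hbdd ⟨τstar, hmem⟩
  have h₂ := le_ciSup hbdd ⟨-τstar, hmem_neg⟩
  have := two_mul_sq_mul_rho_le_regret_add ht hδ h01
  rw [hsup]
  linarith
end

section
/- Let 0 < c < τ*. Define the decision rule δ*(y) = exp(2cy)/(exp(2cy)+1). Then δ* is minimax optimal for mean square regret in the one-dimensional Gaussian problem with parameter space [−c,c]: for every measurable rule δ : ℝ → [0,1] one has sup_{τ∈[−c,c]} R(δ,τ) ≥ sup_{τ∈[−c,c]} R(δ*,τ), and moreover sup_{τ∈[−c,c]} R(δ*,τ) = c² ρ(c). -/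
open Real MeasureTheory

/-!
Write `q_b(y) = 1 / (exp (2 b y) + 1)`, so that `δ* = 1 - q_c` and `R(δ*, τ) = τ² m(|τ|)` with
`m(t) = ∫ q_c² φ(· - t)`. For the lower bound, `(R(δ, c) + R(δ, -c)) / 2` is the Bayes risk of `δ`
for the prior putting mass `1/2` on `±c`, and pointwise in `y` the Bayes rule `1 - q_c` minimises
it, giving `c² ρ(c)`. For the upper bound, differentiating under the integral gives
`(t² m(t))' = 2 t m(t) (1 - κ(t))` with `κ(t) = 2 c t (1 - m₃(t) / m(t))`, `m₃(t) = ∫ q_c³ φ(· - t)`.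
The Gaussian family has monotone likelihood ratio and `q_c` is decreasing, so `m₃ / m` decreases
and `κ` increases on `[0, ∞)`. If `κ(c) > 1`, then `t² m(t)` would strictly decrease on `[c, τ*]`,
contradicting `c² ρ(c) ≤ τ*² ρ(τ*) ≤ τ*² m(τ*)` (the last step is Bayes optimality of `q_{τ*}`).
Hence `κ ≤ 1` on `[0, c]`, and `t² m(t)` is maximal on `[0, c]` at `t = c`, where it is `c² ρ(c)`.
-/

open ProbabilityTheory Set

namespace MinimaxRegret

lemma gaussPdf_pos (x : ℝ) : 0 < gaussPdf x := by
  unfold gaussPdf; positivity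

lemma gaussPdf_neg (x : ℝ) : gaussPdf (-x) = gaussPdf x := by
  simp [gaussPdf]

lemma gaussPdf_sub_eq_gaussianPDFReal (y t : ℝ) : gaussPdf (y - t) = gaussianPDFReal t 1 y := by
  simp [gaussPdf, gaussianPDFReal]

lemma integrable_gaussPdf_sub (t : ℝ) : Integrable fun y => gaussPdf (y - t) := by
  simpa only [gaussPdf_sub_eq_gaussianPDFReal] using integrable_gaussianPDFReal t 1

lemma integral_gaussPdf_sub (t : ℝ) : ∫ y, gaussPdf (y - t) = 1 := by
  simpa only [gaussPdf_sub_eq_gaussianPDFReal] using integral_gaussianPDFReal_eq_one t one_ne_zero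

lemma integrable_mul_gaussPdf_sub {f : ℝ → ℝ} (hf : AEStronglyMeasurable f) {C : ℝ}
    (hC : ∀ y, |f y| ≤ C) (t : ℝ) : Integrable fun y => f y * gaussPdf (y - t) :=
  (integrable_gaussPdf_sub t).bdd_mul hf (ae_of_all _ hC)

lemma gaussPdf_sub_mul_gaussPdf_sub_le {σ τ x y : ℝ} (hστ : σ ≤ τ) (hxy : x ≤ y) :
    gaussPdf (x - τ) * gaussPdf (y - σ) ≤ gaussPdf (x - σ) * gaussPdf (y - τ) := by
  unfold gaussPdf
  rw [mul_mul_mul_comm, mul_mul_mul_comm _ (exp _), ← exp_add, ← exp_add]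
  gcongr _ * exp ?_
  nlinarith [mul_nonneg (sub_nonneg.2 hστ) (sub_nonneg.2 hxy)]

lemma hasDerivAt_integral_mul_gaussPdf_sub {g g' : ℝ → ℝ} {M C : ℝ}
    (hg : ∀ y, HasDerivAt g (g' y) y) (hgM : ∀ y, |g y| ≤ M) (hg'C : ∀ y, |g' y| ≤ C) (t : ℝ) :
    HasDerivAt (fun s => ∫ y, g y * gaussPdf (y - s)) (∫ y, g' y * gaussPdf (y - t)) t := by
  have shift : ∀ (f : ℝ → ℝ) (s : ℝ),
      ∫ y, f y * gaussPdf (y - s) = ∫ y, f (y + s) * gaussPdf y := fun f s => by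
    rw [← integral_add_right_eq_self _ s]; simp
  simp only [shift]
  have hgc : Continuous g := continuous_iff_continuousAt.2 fun y => (hg y).continuousAt
  have hg'm : Measurable g' := by
    rw [show g' = deriv g from funext fun y => (hg y).deriv.symm]
    exact measurable_deriv g
  refine (hasDerivAt_integral_of_dominated_loc_of_deriv_le (s := univ)
    (F' := fun s y => g' (y + s) * gaussPdf y) (bound := fun y => C * gaussPdf y) Filter.univ_mem
    (Filter.Eventually.of_forall fun s => ?_) ?_ ?_ ?_ ?_ ?_).2
  · exact ((hgc.comp (continuous_add_const s)).mul
      (by unfold gaussPdf; fun_prop)).aestronglyMeasurable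
  · simpa using (integrable_mul_gaussPdf_sub hgc.aestronglyMeasurable hgM t).comp_add_right t
  · exact ((hg'm.comp (measurable_add_const t)).mul
      (by unfold gaussPdf; fun_prop)).aestronglyMeasurable
  · refine ae_of_all _ fun y s _ => ?_
    rw [norm_mul, Real.norm_of_nonneg (gaussPdf_pos y).le]
    exact mul_le_mul_of_nonneg_right (hg'C _) (gaussPdf_pos y).le
  · simpa using (integrable_gaussPdf_sub 0).const_mul C
  · exact ae_of_all _ fun y s _ =>
      ((hg (y + s)).comp s ((hasDerivAt_id s).const_add y)).mul_const _ |>.congr_deriv (by simp)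

/-- Under the prior putting mass 1/2 on each of `±b`, `postNeg b y` is the posterior probability
of `-b` given the observation `y`; the Bayes rule for that prior is `1 - postNeg b`. -/
noncomputable def postNeg (b y : ℝ) : ℝ := (exp (2 * b * y) + 1)⁻¹

lemma postNeg_pos (b y : ℝ) : 0 < postNeg b y := by
  unfold postNeg; positivity

lemma postNeg_le_one (b y : ℝ) : postNeg b y ≤ 1 :=
  inv_le_one_of_one_le₀ (by linarith [exp_pos (2 * b * y)])

lemma continuous_postNeg (b : ℝ) : Continuous (postNeg b) :=
  Continuous.inv₀ (by fun_prop) fun y => by positivity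

lemma postNeg_neg_right (b y : ℝ) : postNeg b (-y) = 1 - postNeg b y := by
  have := exp_pos (2 * b * y)
  rw [postNeg, postNeg, mul_neg, exp_neg]
  field_simp
  ring

lemma one_sub_exp_div_exp_add_one (b y : ℝ) :
    1 - exp (2 * b * y) / (exp (2 * b * y) + 1) = postNeg b y := by
  have := exp_pos (2 * b * y)
  rw [postNeg]
  field_simp
  ring

lemma antitone_postNeg {b : ℝ} (hb : 0 ≤ b) : Antitone (postNeg b) := fun x y hxy =>
  inv_anti₀ (by positivity) (by gcongr)

lemma hasDerivAt_postNeg_sq (b y : ℝ) :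
    HasDerivAt (fun y => postNeg b y ^ 2)
      (-(4 * b) * (postNeg b y ^ 2 - postNeg b y ^ 3)) y := by
  have hne : exp (2 * b * y) + 1 ≠ 0 := by positivity
  have h := ((((hasDerivAt_id y).const_mul (2 * b)).exp.add_const 1).inv hne).pow 2
  refine h.congr_deriv ?_
  simp only [postNeg, id, Pi.inv_apply, Nat.cast_ofNat, Nat.add_one_sub_one, pow_one]
  field_simp
  ring

lemma postNeg_mul_gaussPdf_add (t y : ℝ) :
    postNeg t y * (gaussPdf (y - t) + gaussPdf (y + t)) = gaussPdf (y + t) := by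
  have hratio : gaussPdf (y - t) = exp (2 * t * y) * gaussPdf (y + t) := by
    unfold gaussPdf
    rw [mul_left_comm, ← exp_add]
    ring_nf
  have := exp_pos (2 * t * y)
  rw [hratio, postNeg]
  field_simp

noncomputable def postNegMoment (n : ℕ) (b t : ℝ) : ℝ := ∫ y, postNeg b y ^ n * gaussPdf (y - t)

lemma abs_postNeg_pow_le_one (n : ℕ) (b y : ℝ) : |postNeg b y ^ n| ≤ 1 := by
  rw [abs_of_pos (pow_pos (postNeg_pos b y) n)]
  exact pow_le_one₀ (postNeg_pos b y).le (postNeg_le_one b y)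

lemma integrable_postNeg_pow_mul_gaussPdf_sub (n : ℕ) (b t : ℝ) :
    Integrable fun y => postNeg b y ^ n * gaussPdf (y - t) :=
  integrable_mul_gaussPdf_sub ((continuous_postNeg b).pow n).aestronglyMeasurable
    (abs_postNeg_pow_le_one n b) t

lemma postNegMoment_pos (n : ℕ) (b t : ℝ) : 0 < postNegMoment n b t := by
  refine (integral_pos_iff_support_of_nonneg (fun y => ?_)
    (integrable_postNeg_pow_mul_gaussPdf_sub n b t)).2 ?_
  · exact (mul_pos (pow_pos (postNeg_pos b y) n) (gaussPdf_pos _)).le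
  · rw [Function.support_eq_univ fun y => (mul_pos (pow_pos (postNeg_pos b y) n) (gaussPdf_pos _)).ne']
    simp

lemma postNegMoment_succ_le (n : ℕ) (b t : ℝ) : postNegMoment (n + 1) b t ≤ postNegMoment n b t :=
  integral_mono (integrable_postNeg_pow_mul_gaussPdf_sub _ b t)
    (integrable_postNeg_pow_mul_gaussPdf_sub n b t) fun y =>
      mul_le_mul_of_nonneg_right
        (pow_le_pow_of_le_one (postNeg_pos b y).le (postNeg_le_one b y) n.le_succ)
        (gaussPdf_pos _).le

lemma rho_eq_postNegMoment (a : ℝ) : ρ a = postNegMoment 2 a a := by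
  simp only [ρ, postNegMoment, postNeg, one_div]

lemma integral_one_sub_postNeg_sq_mul_gaussPdf_sub (b t : ℝ) :
    ∫ y, (1 - postNeg b y) ^ 2 * gaussPdf (y - t) = postNegMoment 2 b (-t) := by
  rw [← integral_neg_eq_self, postNegMoment]
  congr 1 with y
  rw [postNeg_neg_right, ← gaussPdf_neg]
  ring_nf

lemma hasDerivAt_postNegMoment_two (b t : ℝ) :
    HasDerivAt (postNegMoment 2 b) (-(4 * b) * (postNegMoment 2 b t - postNegMoment 3 b t)) t := by
  have hbound : ∀ y, |-(4 * b) * (postNeg b y ^ 2 - postNeg b y ^ 3)| ≤ 4 * |b| := fun y => by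
    have h0 := postNeg_pos b y
    have h1 := postNeg_le_one b y
    rw [abs_mul, abs_neg, abs_mul, abs_of_pos (by norm_num : (0 : ℝ) < 4)]
    refine mul_le_of_le_one_right (by positivity)
      (abs_le.2 ⟨?_, ?_⟩ : |postNeg b y ^ 2 - postNeg b y ^ 3| ≤ 1) <;>
      nlinarith [pow_pos h0 2, mul_le_mul_of_nonneg_left h1 (pow_pos h0 2).le]
  have h := hasDerivAt_integral_mul_gaussPdf_sub (hasDerivAt_postNeg_sq b)
    (abs_postNeg_pow_le_one 2 b) hbound t
  refine h.congr_deriv ?_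
  simp_rw [mul_assoc, sub_mul]
  rw [integral_const_mul, integral_sub (integrable_postNeg_pow_mul_gaussPdf_sub 2 b t)
    (integrable_postNeg_pow_mul_gaussPdf_sub 3 b t)]
  rfl

lemma antitone_sub_mul_gaussPdf_sub_cross_nonpos {u : ℝ → ℝ} (hu : Antitone u) {σ τ : ℝ}
    (hστ : σ ≤ τ) (x y : ℝ) : (u x - u y) *
      (gaussPdf (x - τ) * gaussPdf (y - σ) - gaussPdf (x - σ) * gaussPdf (y - τ)) ≤ 0 := by
  rcases le_total x y with hxy | hyx
  · exact mul_nonpos_of_nonneg_of_nonpos (sub_nonneg.2 (hu hxy))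
      (sub_nonpos.2 (gaussPdf_sub_mul_gaussPdf_sub_le hστ hxy))
  · refine mul_nonpos_of_nonpos_of_nonneg (sub_nonpos.2 (hu hyx)) (sub_nonneg.2 ?_)
    linarith [gaussPdf_sub_mul_gaussPdf_sub_le hστ hyx]

/-- The Gaussian location family has monotone likelihood ratio, so the `w`-weighted mean of an
antitone `u` decreases with the location; the difference of the two sides is a double integral
whose symmetrisation is pointwise nonpositive. -/
lemma integral_antitone_mul_gaussPdf_sub_mul_le {u w : ℝ → ℝ} (hu : Antitone u)
    (hw : ∀ y, 0 ≤ w y) (huw : ∀ t, Integrable fun y => u y * w y * gaussPdf (y - t))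
    (hw' : ∀ t, Integrable fun y => w y * gaussPdf (y - t)) {σ τ : ℝ} (hστ : σ ≤ τ) :
    (∫ y, u y * w y * gaussPdf (y - τ)) * ∫ y, w y * gaussPdf (y - σ)
      ≤ (∫ y, u y * w y * gaussPdf (y - σ)) * ∫ y, w y * gaussPdf (y - τ) := by
  set F : ℝ × ℝ → ℝ := fun z => u z.1 * w z.1 * gaussPdf (z.1 - τ) * (w z.2 * gaussPdf (z.2 - σ))
    - u z.1 * w z.1 * gaussPdf (z.1 - σ) * (w z.2 * gaussPdf (z.2 - τ))
  have hF : Integrable F (volume.prod volume) :=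
    ((huw τ).mul_prod (hw' σ)).sub ((huw σ).mul_prod (hw' τ))
  have hsymm : ∀ z : ℝ × ℝ, F z + F z.swap = w z.1 * w z.2 * ((u z.1 - u z.2) *
      (gaussPdf (z.1 - τ) * gaussPdf (z.2 - σ) - gaussPdf (z.1 - σ) * gaussPdf (z.2 - τ))) := by
    intro z; simp only [F, Prod.fst_swap, Prod.snd_swap]; ring
  have hdiff : (∫ y, u y * w y * gaussPdf (y - τ)) * (∫ y, w y * gaussPdf (y - σ))
      - (∫ y, u y * w y * gaussPdf (y - σ)) * (∫ y, w y * gaussPdf (y - τ))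
      = ∫ z, F z ∂(volume.prod volume) := by
    rw [integral_sub ((huw τ).mul_prod (hw' σ)) ((huw σ).mul_prod (hw' τ)),
      ← integral_prod_mul, ← integral_prod_mul]
  have htwice : ∫ z, (F z + F z.swap) ∂(volume.prod volume)
      = 2 * ∫ z, F z ∂(volume.prod volume) := by
    rw [integral_add hF (by exact hF.swap), integral_prod_swap F]; ring
  have hnonpos : ∫ z, (F z + F z.swap) ∂(volume.prod volume) ≤ 0 :=
    integral_nonpos fun z => by
      rw [hsymm]
      exact mul_nonpos_of_nonneg_of_nonpos (mul_nonneg (hw _) (hw _))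
        (antitone_sub_mul_gaussPdf_sub_cross_nonpos hu hστ _ _)
  linarith

lemma antitone_postNegMoment_three_div_two {b : ℝ} (hb : 0 ≤ b) :
    Antitone fun t => postNegMoment 3 b t / postNegMoment 2 b t := by
  intro σ τ hστ
  rw [div_le_div_iff₀ (postNegMoment_pos 2 b τ) (postNegMoment_pos 2 b σ)]
  have h := integral_antitone_mul_gaussPdf_sub_mul_le (antitone_postNeg hb)
    (fun y => (pow_pos (postNeg_pos b y) 2).le) (fun t => ?_)
    (integrable_postNeg_pow_mul_gaussPdf_sub 2 b) hστ
  · simpa only [postNegMoment, ← pow_succ'] using h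
  · simpa only [← pow_succ'] using integrable_postNeg_pow_mul_gaussPdf_sub 3 b t

lemma integrable_sq_mul_gaussPdf_sub {f : ℝ → ℝ} (hf : Measurable f)
    (hf01 : ∀ y, f y ∈ Icc (0 : ℝ) 1) (t : ℝ) : Integrable fun y => f y ^ 2 * gaussPdf (y - t) :=
  integrable_mul_gaussPdf_sub (hf.pow_const 2).aestronglyMeasurable (fun y => by
    rw [abs_of_nonneg (sq_nonneg _)]; exact pow_le_one₀ (hf01 y).1 (hf01 y).2) t

lemma sq_mul_add_one_sub_sq_mul_le {A B q : ℝ} (hA : 0 < A) (hB : 0 < B) (hq : q * (A + B) = B)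
    (s : ℝ) : q ^ 2 * A + (1 - q) ^ 2 * B ≤ s ^ 2 * A + (1 - s) ^ 2 * B := by
  nlinarith [mul_nonneg (add_pos hA hB).le (sq_nonneg (s - q))]

lemma two_mul_rho_le {s : ℝ → ℝ} (hs : Measurable s) (hs01 : ∀ y, s y ∈ Icc (0 : ℝ) 1) (t : ℝ) :
    2 * ρ t ≤ (∫ y, s y ^ 2 * gaussPdf (y - t)) + ∫ y, (1 - s y) ^ 2 * gaussPdf (y + t) := by
  have hint : ∀ f : ℝ → ℝ, Measurable f → (∀ y, f y ∈ Icc (0 : ℝ) 1) →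
      (Integrable fun y => f y ^ 2 * gaussPdf (y - t)) ∧
        Integrable fun y => (1 - f y) ^ 2 * gaussPdf (y + t) := fun f hf hf01 =>
    ⟨integrable_sq_mul_gaussPdf_sub hf hf01 t, by
      simpa using integrable_sq_mul_gaussPdf_sub (f := fun y => 1 - f y) (by fun_prop)
        (fun y => Icc.mem_iff_one_sub_mem.1 (hf01 y)) (-t)⟩
  have hq := hint _ (continuous_postNeg t).measurable
    fun y => ⟨(postNeg_pos t y).le, postNeg_le_one t y⟩
  have h2ρ : 2 * ρ t = (∫ y, postNeg t y ^ 2 * gaussPdf (y - t))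
      + ∫ y, (1 - postNeg t y) ^ 2 * gaussPdf (y + t) := by
    have hrefl := integral_one_sub_postNeg_sq_mul_gaussPdf_sub t (-t)
    simp only [sub_neg_eq_add, neg_neg] at hrefl
    rw [hrefl, rho_eq_postNegMoment, two_mul]
    rfl
  rw [h2ρ, ← integral_add hq.1 hq.2, ← integral_add (hint s hs hs01).1 (hint s hs hs01).2]
  exact integral_mono (hq.1.add hq.2) ((hint s hs hs01).1.add (hint s hs hs01).2) fun y =>
    sq_mul_add_one_sub_sq_mul_le (gaussPdf_pos _) (gaussPdf_pos _) (postNeg_mul_gaussPdf_add t y) _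

lemma rho_le_postNegMoment_two (r t : ℝ) : ρ t ≤ postNegMoment 2 r t := by
  have h := two_mul_rho_le (continuous_postNeg r).measurable
    (fun y => ⟨(postNeg_pos r y).le, postNeg_le_one r y⟩) t
  have hrefl := integral_one_sub_postNeg_sq_mul_gaussPdf_sub r (-t)
  simp only [sub_neg_eq_add, neg_neg] at hrefl
  rw [hrefl] at h
  change 2 * ρ t ≤ postNegMoment 2 r t + postNegMoment 2 r t at h
  linarith

noncomputable def dampingFactor (b t : ℝ) : ℝ :=
  2 * b * t * (1 - postNegMoment 3 b t / postNegMoment 2 b t)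

lemma hasDerivAt_sq_mul_postNegMoment_two (b t : ℝ) :
    HasDerivAt (fun t => t ^ 2 * postNegMoment 2 b t)
      (2 * t * postNegMoment 2 b t * (1 - dampingFactor b t)) t := by
  refine ((hasDerivAt_pow 2 t).mul (hasDerivAt_postNegMoment_two b t)).congr_deriv ?_
  have := (postNegMoment_pos 2 b t).ne'
  rw [dampingFactor]
  field_simp
  ring

lemma monotoneOn_dampingFactor {b : ℝ} (hb : 0 ≤ b) : MonotoneOn (dampingFactor b) (Ici 0) := by
  intro σ (hσ : 0 ≤ σ) τ (hτ : 0 ≤ τ) hστ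
  have hratio : ∀ t, postNegMoment 3 b t / postNegMoment 2 b t ≤ 1 := fun t =>
    (div_le_one (postNegMoment_pos 2 b t)).2 (postNegMoment_succ_le 2 b t)
  exact mul_le_mul (by gcongr) (sub_le_sub_left (antitone_postNegMoment_three_div_two hb hστ) 1)
    (sub_nonneg.2 (hratio σ)) (by positivity)

lemma dampingFactor_self_le_one {τstar c : ℝ}
    (hτmax : ∀ τ : ℝ, 0 ≤ τ → τ ^ 2 * ρ τ ≤ τstar ^ 2 * ρ τstar) (hc0 : 0 < c) (hc : c < τstar) :
    dampingFactor c c ≤ 1 := by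
  by_contra! hgt
  have hanti : StrictAntiOn (fun t => t ^ 2 * postNegMoment 2 c t) (Icc c τstar) := by
    refine strictAntiOn_of_deriv_neg (convex_Icc c τstar)
      (fun t _ => (hasDerivAt_sq_mul_postNegMoment_two c t).continuousAt.continuousWithinAt)
      fun t ht => ?_
    rw [interior_Icc] at ht
    have hfac : 1 < dampingFactor c t :=
      hgt.trans_le (monotoneOn_dampingFactor hc0.le hc0.le (hc0.trans ht.1).le ht.1.le)
    rw [(hasDerivAt_sq_mul_postNegMoment_two c t).deriv]
    have := postNegMoment_pos 2 c t
    exact mul_neg_of_pos_of_neg (by nlinarith [ht.1]) (by linarith)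
  have hlt := hanti (left_mem_Icc.2 hc.le) (right_mem_Icc.2 hc.le) hc
  have hle : c ^ 2 * postNegMoment 2 c c ≤ τstar ^ 2 * postNegMoment 2 c τstar := by
    rw [← rho_eq_postNegMoment]
    exact (hτmax c hc0.le).trans
      (mul_le_mul_of_nonneg_left (rho_le_postNegMoment_two c τstar) (sq_nonneg _))
  exact absurd hle (not_le.2 hlt)

lemma sq_mul_postNegMoment_two_le {τstar c : ℝ}
    (hτmax : ∀ τ : ℝ, 0 ≤ τ → τ ^ 2 * ρ τ ≤ τstar ^ 2 * ρ τstar) (hc0 : 0 < c) (hc : c < τstar)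
    {τ : ℝ} (hτ0 : 0 ≤ τ) (hτc : τ ≤ c) :
    τ ^ 2 * postNegMoment 2 c τ ≤ c ^ 2 * ρ c := by
  rw [rho_eq_postNegMoment]
  refine monotoneOn_of_deriv_nonneg (convex_Icc 0 c)
    (fun t _ => (hasDerivAt_sq_mul_postNegMoment_two c t).continuousAt.continuousWithinAt)
    (fun t _ => (hasDerivAt_sq_mul_postNegMoment_two c t).differentiableAt.differentiableWithinAt)
    (fun t ht => ?_) ⟨hτ0, hτc⟩ ⟨hc0.le, le_rfl⟩ hτc
  rw [interior_Icc] at ht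
  have hfac : dampingFactor c t ≤ 1 :=
    (monotoneOn_dampingFactor hc0.le ht.1.le hc0.le ht.2.le).trans
      (dampingFactor_self_le_one hτmax hc0 hc)
  rw [(hasDerivAt_sq_mul_postNegMoment_two c t).deriv]
  have := postNegMoment_pos 2 c t
  exact mul_nonneg (by nlinarith [ht.1]) (by linarith)

lemma R_of_nonneg (δ : ℝ → ℝ) {τ : ℝ} (hτ : 0 ≤ τ) :
    R δ τ = τ ^ 2 * ∫ y, (1 - δ y) ^ 2 * gaussPdf (y - τ) := by
  rw [R, if_pos hτ]

lemma R_of_neg (δ : ℝ → ℝ) {τ : ℝ} (hτ : τ < 0) :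
    R δ τ = τ ^ 2 * ∫ y, δ y ^ 2 * gaussPdf (y - τ) := by
  simp [R, if_neg hτ.not_ge]

lemma R_exp_div_exp_add_one (c τ : ℝ) :
    R (fun y => exp (2 * c * y) / (exp (2 * c * y) + 1)) τ = τ ^ 2 * postNegMoment 2 c |τ| := by
  rcases le_or_gt 0 τ with hτ | hτ
  · rw [R_of_nonneg _ hτ, abs_of_nonneg hτ]
    simp only [one_sub_exp_div_exp_add_one]
    rfl
  · rw [R_of_neg _ hτ, abs_of_neg hτ, ← integral_one_sub_postNeg_sq_mul_gaussPdf_sub]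
    simp only [← one_sub_exp_div_exp_add_one, sub_sub_cancel]

lemma R_le_sq {δ : ℝ → ℝ} (hδ : ∀ y, δ y ∈ Icc (0 : ℝ) 1) (τ : ℝ) : R δ τ ≤ τ ^ 2 := by
  refine mul_le_of_le_one_right (sq_nonneg τ) ?_
  have hsq : ∀ y, ((if 0 ≤ τ then (1 : ℝ) else 0) - δ y) ^ 2 ≤ 1 := fun y => by
    have := hδ y
    split_ifs <;> nlinarith [this.1, this.2]
  calc (∫ y, ((if 0 ≤ τ then (1 : ℝ) else 0) - δ y) ^ 2 * gaussPdf (y - τ))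
      ≤ ∫ y, gaussPdf (y - τ) :=
        integral_mono_of_nonneg (ae_of_all _ fun y => by have := gaussPdf_pos (y - τ); positivity)
          (integrable_gaussPdf_sub τ)
          (ae_of_all _ fun y => mul_le_of_le_one_left (gaussPdf_pos _).le (hsq y))
    _ = 1 := integral_gaussPdf_sub τ

lemma two_mul_sq_mul_rho_le_R_add_R_neg {δ : ℝ → ℝ} (hδm : Measurable δ)
    (hδ : ∀ y, δ y ∈ Icc (0 : ℝ) 1) {c : ℝ} (hc : 0 < c) :
    2 * (c ^ 2 * ρ c) ≤ R δ c + R δ (-c) := by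
  have h := two_mul_rho_le (s := fun y => 1 - δ y) (by fun_prop)
    (fun y => Icc.mem_iff_one_sub_mem.1 (hδ y)) c
  simp only [sub_sub_cancel] at h
  rw [R_of_nonneg δ hc.le, R_of_neg δ (neg_neg_of_pos hc), neg_sq]
  simp only [sub_neg_eq_add]
  nlinarith [mul_le_mul_of_nonneg_left h (sq_nonneg c)]

end MinimaxRegret

open MinimaxRegret

theorem stmt_1_general (τstar c : ℝ)
    (hτmax : ∀ τ : ℝ, 0 ≤ τ → τ ^ 2 * ρ τ ≤ τstar ^ 2 * ρ τstar)
    (hc0 : 0 < c) (hc : c < τstar)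
    (δstar : ℝ → ℝ)
    (hδstar : ∀ y, δstar y = Real.exp (2 * c * y) / (Real.exp (2 * c * y) + 1)) :
    (∀ δ : ℝ → ℝ, Measurable δ → (∀ y, δ y ∈ Set.Icc (0 : ℝ) 1) →
      (⨆ τ : Set.Icc (-c) c, R δstar τ) ≤ ⨆ τ : Set.Icc (-c) c, R δ τ) ∧
    (⨆ τ : Set.Icc (-c) c, R δstar τ) = c ^ 2 * ρ c := by
  obtain rfl : δstar = fun y => exp (2 * c * y) / (exp (2 * c * y) + 1) := funext hδstar
  have hsq : ∀ τ : Icc (-c) c, (τ : ℝ) ^ 2 ≤ c ^ 2 := fun τ => sq_le_sq' τ.2.1 τ.2.2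
  have hstar_le : ∀ τ : Icc (-c) c, R (fun y => exp (2 * c * y) / (exp (2 * c * y) + 1)) τ
      ≤ c ^ 2 * ρ c := fun τ => by
    rw [R_exp_div_exp_add_one, ← sq_abs]
    exact sq_mul_postNegMoment_two_le hτmax hc0 hc (abs_nonneg _) (abs_le.2 τ.2)
  have hstar : (⨆ τ : Icc (-c) c, R (fun y => exp (2 * c * y) / (exp (2 * c * y) + 1)) τ)
      = c ^ 2 * ρ c := by
    have : Nonempty (Icc (-c) c) := ⟨⟨c, by linarith, le_rfl⟩⟩
    refine le_antisymm (ciSup_le hstar_le) (le_ciSup_of_le ⟨_, forall_mem_range.2 hstar_le⟩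
      ⟨c, by linarith, le_rfl⟩ ?_)
    rw [R_exp_div_exp_add_one, abs_of_pos hc0, rho_eq_postNegMoment]
  refine ⟨fun δ hδm hδ => ?_, hstar⟩
  have hbdd : BddAbove (range fun τ : Icc (-c) c => R δ τ) :=
    ⟨c ^ 2, forall_mem_range.2 fun τ => (R_le_sq hδ τ).trans (hsq τ)⟩
  have hc_le := le_ciSup hbdd ⟨c, by linarith, le_rfl⟩
  have hnegc_le := le_ciSup hbdd ⟨-c, le_rfl, by linarith⟩
  have := two_mul_sq_mul_rho_le_R_add_R_neg hδm hδ hc0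
  rw [hstar]
  linarith

/-- If 0 < c < τ*, the rule δ*(y) = exp(2cy)/(exp(2cy)+1) is minimax optimal for
mean square regret over τ ∈ [−c,c], with worst-case regret c²ρ(c). -/
theorem stmt_1 (τstar c : ℝ) (hτ0 : 0 ≤ τstar)
    (hτmax : ∀ τ : ℝ, 0 ≤ τ → τ ^ 2 * ρ τ ≤ τstar ^ 2 * ρ τstar)
    (hc0 : 0 < c) (hc : c < τstar)
    (δstar : ℝ → ℝ)
    (hδstar : ∀ y, δstar y = Real.exp (2 * c * y) / (Real.exp (2 * c * y) + 1)) :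
    (∀ δ : ℝ → ℝ, Measurable δ → (∀ y, δ y ∈ Set.Icc (0 : ℝ) 1) →
      (⨆ τ : Set.Icc (-c) c, R δstar τ) ≤ ⨆ τ : Set.Icc (-c) c, R δ τ) ∧
    (⨆ τ : Set.Icc (-c) c, R δstar τ) = c ^ 2 * ρ c :=
  stmt_1_general τstar c hτmax hc0 hc δstar hδstar
end

section
/- For every θ ∈ ℝ, the following integral identity holds: ∫_ℝ (exp(2θy) / (exp(2θy)+1)³) · y · φ(y−θ) dy = 0. -/
open Real MeasureTheory

lemma odd_integrand (θ y : ℝ) :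
    Real.exp (2 * θ * (-y)) / (Real.exp (2 * θ * (-y)) + 1) ^ 3 *
      ((-y) * gaussPdf (-y - θ)) =
    -(Real.exp (2 * θ * y) / (Real.exp (2 * θ * y) + 1) ^ 3 *
      (y * gaussPdf (y - θ))) := by
  have h1 : Real.exp (2 * θ * (-y)) = (Real.exp (2 * θ * y))⁻¹ := by
    rw [← Real.exp_neg]; ring_nf
  have hpos : (0:ℝ) < Real.exp (2 * θ * y) := Real.exp_pos _
  have hg : gaussPdf (-y - θ) = gaussPdf (y - θ) * Real.exp (-(2 * θ * y)) := by
    unfold gaussPdf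
    rw [mul_assoc, ← Real.exp_add]
    ring_nf
  rw [h1, hg, Real.exp_neg]
  have hne : Real.exp (2 * θ * y) ≠ 0 := ne_of_gt hpos
  field_simp
  ring

/-- For every θ, ∫ (exp(2θy)/(exp(2θy)+1)³) · y · φ(y−θ) dy = 0. -/
theorem stmt_15 (θ : ℝ) :
    ∫ y : ℝ, Real.exp (2 * θ * y) / (Real.exp (2 * θ * y) + 1) ^ 3 *
      (y * gaussPdf (y - θ)) = 0 := by
  set f : ℝ → ℝ := fun y => Real.exp (2 * θ * y) / (Real.exp (2 * θ * y) + 1) ^ 3 *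
      (y * gaussPdf (y - θ)) with hf
  have h1 : ∫ y, f (-y) = ∫ y, f y := integral_neg_eq_self f volume
  have h2 : ∀ y, f (-y) = - f y := fun y => odd_integrand θ y
  have h3 : ∫ y, f (-y) = - ∫ y, f y := by
    simp only [h2]; exact integral_neg f
  linarith [h1, h3]
end
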